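/- Let A and B be distinct F-cliques, with |A| > 1, of a coloring of an AGW graph that has no stable pair of distinct states. Then |A| − |A ∩ B| = |B| − |A ∩ B| > 1. -/

import Mathlib

/-- A directed cycle in the multigraph `E`: a nonempty list of distinct vertices,
consecutive vertices joined by edges, and an edge from the last back to the first. -/
def IsCycle {V : Type} (E : V → Multiset V) (l : List V) : Prop :=
  ∃ h : l ≠ [], l.Nodup ∧ l.Chain' (fun a b => b ∈ E a) ∧ l.head h ∈ E (l.getLast h)

/-- An AGW graph: constant outdegree `k`, strongly connected, and the gcd of the
lengths of all directed cycles is 1 (every common divisor of cycle lengths is 1). -/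
def IsAGW {V : Type} (E : V → Multiset V) (k : ℕ) : Prop :=
  (∀ v, Multiset.card (E v) = k) ∧
  (∀ u v : V, Relation.ReflTransGen (fun a b => b ∈ E a) u v) ∧
  (∀ d : ℕ, (∀ l : List V, IsCycle E l → d ∣ l.length) → d = 1)

/-- A coloring of the multigraph: for every vertex `v` the multiset of images
`{δ a v : a ∈ Fin k}` (with multiplicity) equals `E v`. -/
def IsColoring {V : Type} [Fintype V] {k : ℕ} (E : V → Multiset V)
    (δ : Fin k → V → V) : Prop :=
  ∀ v, Multiset.map (fun a => δ a v) (Finset.univ : Finset (Fin k)).val = E v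

/-- The map `δ_s` of a word `s`: apply the letters of `s` from left to right. -/
def wordMap {V : Type} {k : ℕ} (δ : Fin k → V → V) (s : List (Fin k)) (v : V) : V :=
  s.foldl (fun x a => δ a x) v

/-- A pair of states is synchronizing if some word maps them to the same state. -/
def SyncPair {V : Type} {k : ℕ} (δ : Fin k → V → V) (p q : V) : Prop :=
  ∃ s : List (Fin k), wordMap δ s p = wordMap δ s q

/-- A pair is stable if all of its images under words are equal or synchronizing. -/
def Stable {V : Type} {k : ℕ} (δ : Fin k → V → V) (p q : V) : Prop :=
  ∀ u : List (Fin k), SyncPair δ (wordMap δ u p) (wordMap δ u q)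

/-- A word is synchronizing if it maps the whole state set to a single state. -/
def IsSynchronizingWord {V : Type} {k : ℕ} (δ : Fin k → V → V) (s : List (Fin k)) : Prop :=
  ∃ q : V, ∀ v : V, wordMap δ s v = q

/-- An F-clique: an image `V·s` of the whole state set in which every pair of
distinct states is a deadlock (not synchronizing). -/
def IsFClique {V : Type} [Fintype V] [DecidableEq V] {k : ℕ}
    (δ : Fin k → V → V) (F : Finset V) : Prop :=
  (∃ s : List (Fin k), F = Finset.image (wordMap δ s) Finset.univ) ∧
  ∀ p ∈ F, ∀ q ∈ F, p ≠ q → ¬ SyncPair δ p q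

/-- A weight function: positive and a left eigenvector of the adjacency matrix
(multiplicities of edges) with eigenvalue `k`. -/
def IsWeight {V : Type} [Fintype V] [DecidableEq V] (E : V → Multiset V) (k : ℕ)
    (w : V → ℕ) : Prop :=
  (∀ v, 1 ≤ w v) ∧ ∀ q, (∑ p, w p * (E p).count q) = k * w q

/-- The weight of a set of vertices. -/
def weight {V : Type} (w : V → ℕ) (D : Finset V) : ℕ := ∑ p ∈ D, w p

/-- `D` is mapped to a single state by some word. -/
def IsSyncSet {V : Type} [Fintype V] [DecidableEq V] {k : ℕ} (δ : Fin k → V → V)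
    (D : Finset V) : Prop :=
  ∃ s : List (Fin k), (D.image (wordMap δ s)).card = 1

/-- An F-maximal set: a set mapped to a single state by some word, of maximal weight. -/
def IsFMaximal {V : Type} [Fintype V] [DecidableEq V] {k : ℕ} (δ : Fin k → V → V)
    (w : V → ℕ) (D : Finset V) : Prop :=
  IsSyncSet δ D ∧ ∀ D' : Finset V, IsSyncSet δ D' → weight w D' ≤ weight w D

/-- `w*`: the maximal weight of a set mapped to a single state by some word. -/
noncomputable def wstar {V : Type} [Fintype V] [DecidableEq V] {k : ℕ}
    (δ : Fin k → V → V) (w : V → ℕ) : ℕ :=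
  sSup {m | ∃ D : Finset V, IsSyncSet δ D ∧ weight w D = m}

/-- A spanning subgraph: a choice of one outgoing edge of every vertex. -/
def IsSpanning {V : Type} (E : V → Multiset V) (f : V → V) : Prop :=
  ∀ v, f v ∈ E v

/-- The level of a vertex: the least `m` such that `f^[m] v` is `f`-periodic. -/
noncomputable def level {V : Type} (f : V → V) (v : V) : ℕ :=
  sInf {m | ∃ n > 0, f^[n] (f^[m] v) = f^[m] v}

/-- The root of a vertex: its image on the cycle reached along its tree. -/
noncomputable def root {V : Type} (f : V → V) (v : V) : V :=
  f^[level f v] v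

/-!
All F-cliques have the same size, since any set of pairwise deadlocked states is mapped
injectively into an F-clique `V·s` by the word `s`. If the distinct F-cliques `A` and `B`
differed in a single state each, `A \ B = {p}` and `B \ A = {q}`, then `(p, q)` would be stable:
were `δ_u p, δ_u q` a deadlock, the set `(A ∪ {q})·u` of `|A| + 1` states would be pairwise
deadlocked, too large for an F-clique.
-/

section

variable {V : Type} {k : ℕ} {δ : Fin k → V → V}

lemma wordMap_append (δ : Fin k → V → V) (s t : List (Fin k)) (v : V) :
    wordMap δ (s ++ t) v = wordMap δ t (wordMap δ s v) :=
  List.foldl_append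

lemma SyncPair.symm {p q : V} (h : SyncPair δ p q) : SyncPair δ q p :=
  let ⟨s, hs⟩ := h; ⟨s, hs.symm⟩

lemma SyncPair.of_wordMap {p q : V} {u : List (Fin k)}
    (h : SyncPair δ (wordMap δ u p) (wordMap δ u q)) : SyncPair δ p q :=
  let ⟨s, hs⟩ := h; ⟨u ++ s, by simpa only [wordMap_append] using hs⟩

variable [Fintype V] [DecidableEq V]

lemma card_le_card_image_wordMap_univ {T : Finset V} {u : List (Fin k)}
    (hT : (T : Set V).Pairwise fun x y => ¬ SyncPair δ (wordMap δ u x) (wordMap δ u y))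
    (s : List (Fin k)) : T.card ≤ (Finset.univ.image (wordMap δ s)).card := by
  have hinj : Set.InjOn (wordMap δ (u ++ s)) T := by
    intro x hx y hy hxy
    by_contra hne
    exact hT hx hy hne ⟨s, by simpa only [wordMap_append] using hxy⟩
  calc T.card = (T.image (wordMap δ (u ++ s))).card := (Finset.card_image_of_injOn hinj).symm
    _ ≤ (Finset.univ.image (wordMap δ s)).card := by
      refine Finset.card_le_card fun v hv => ?_
      obtain ⟨x, -, rfl⟩ := Finset.mem_image.1 hv
      rw [wordMap_append]
      exact Finset.mem_image_of_mem _ (Finset.mem_univ _)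

lemma IsFClique.card_le_of_pairwise {A T : Finset V} (hA : IsFClique δ A) {u : List (Fin k)}
    (hT : (T : Set V).Pairwise fun x y => ¬ SyncPair δ (wordMap δ u x) (wordMap δ u y)) :
    T.card ≤ A.card := by
  obtain ⟨⟨s, rfl⟩, -⟩ := hA
  exact card_le_card_image_wordMap_univ hT s

lemma IsFClique.card_eq {A B : Finset V} (hA : IsFClique δ A) (hB : IsFClique δ B) :
    A.card = B.card :=
  le_antisymm (hB.card_le_of_pairwise (u := []) hA.2) (hA.card_le_of_pairwise (u := []) hB.2)

lemma IsFClique.pairwise_not_syncPair_wordMap {A : Finset V} (hA : IsFClique δ A)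
    (u : List (Fin k)) :
    (A : Set V).Pairwise fun x y => ¬ SyncPair δ (wordMap δ u x) (wordMap δ u y) :=
  fun _ hx _ hy hxy h => hA.2 _ hx _ hy hxy h.of_wordMap

lemma IsFClique.stable_of_sdiff_eq_singleton {A B : Finset V} {p q : V}
    (hA : IsFClique δ A) (hB : IsFClique δ B) (hp : A \ B = {p}) (hq : B \ A = {q}) :
    Stable δ p q := by
  have hqB : q ∈ B ∧ q ∉ A := Finset.mem_sdiff.1 (hq ▸ Finset.mem_singleton_self q)
  have hmemB : ∀ a ∈ A, a ≠ p → a ∈ B := fun a ha hap => by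
    by_contra haB
    exact hap (Finset.mem_singleton.1 (hp ▸ Finset.mem_sdiff.2 ⟨ha, haB⟩))
  intro u
  by_contra hpq
  have hqa : ∀ a ∈ A, ¬ SyncPair δ (wordMap δ u q) (wordMap δ u a) := fun a ha h => by
    rcases eq_or_ne a p with rfl | hap
    · exact hpq h.symm
    · exact hB.2 q hqB.1 a (hmemB a ha hap) (fun hqa => hqB.2 (hqa ▸ ha)) h.of_wordMap
  have hins : ((insert q A : Finset V) : Set V).Pairwise
      fun x y => ¬ SyncPair δ (wordMap δ u x) (wordMap δ u y) := by
    rw [Finset.coe_insert, Set.pairwise_insert]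
    exact ⟨hA.pairwise_not_syncPair_wordMap u,
      fun a ha _ => ⟨hqa a ha, fun h => hqa a ha h.symm⟩⟩
  have := hA.card_le_of_pairwise hins
  rw [Finset.card_insert_of_notMem hqB.2] at this
  omega

end

theorem FClique_diff_card_general {V : Type} [Fintype V] [DecidableEq V]
    (k : ℕ) (δ : Fin k → V → V)
    (hnostable : ∀ p q : V, p ≠ q → ¬ Stable δ p q)
    (A B : Finset V) (hA : IsFClique δ A) (hB : IsFClique δ B)
    (hAB : A ≠ B) :
    A.card - (A ∩ B).card = B.card - (A ∩ B).card ∧ 1 < A.card - (A ∩ B).card := by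
  have hcard := hA.card_eq hB
  refine ⟨by rw [hcard], ?_⟩
  have hAdiff : (A \ B).card = A.card - (A ∩ B).card := by
    rw [Finset.card_sdiff, Finset.inter_comm]
  have hBdiff : (B \ A).card = A.card - (A ∩ B).card := by
    rw [Finset.card_sdiff, hcard]
  have hne : (A \ B).Nonempty :=
    Finset.sdiff_nonempty.2 fun hsub => hAB (Finset.eq_of_subset_of_card_le hsub hcard.ge)
  by_contra hle
  obtain ⟨p, hp⟩ := Finset.card_eq_one.1 (show (A \ B).card = 1 by have := hne.card_pos; omega)
  obtain ⟨q, hq⟩ := Finset.card_eq_one.1 (show (B \ A).card = 1 by have := hne.card_pos; omega)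
  have hpq : p ≠ q := fun h =>
    (Finset.mem_sdiff.1 (hq ▸ Finset.mem_singleton_self q)).2
      (h ▸ (Finset.mem_sdiff.1 (hp ▸ Finset.mem_singleton_self p)).1)
  exact hnostable p q hpq (hA.stable_of_sdiff_eq_singleton hB hp hq)

/-- If `A`, `B` are distinct F-cliques with `|A| > 1` of a coloring
without stable pairs of distinct states, then `|A| − |A∩B| = |B| − |A∩B| > 1`. -/
theorem FClique_diff_card {V : Type} [Fintype V] [DecidableEq V] [Nonempty V]
    (E : V → Multiset V) (k : ℕ) (hAGW : IsAGW E k)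
    (δ : Fin k → V → V) (hδ : IsColoring E δ)
    (hnostable : ∀ p q : V, p ≠ q → ¬ Stable δ p q)
    (A B : Finset V) (hA : IsFClique δ A) (hB : IsFClique δ B)
    (hAB : A ≠ B) (hcard : 1 < A.card) :
    A.card - (A ∩ B).card = B.card - (A ∩ B).card ∧ 1 < A.card - (A ∩ B).card :=
  FClique_diff_card_general k δ hnostable A B hA hB hAB
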